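/- arXiv:2205.09386 — 2 statements merged into one kernel-verified Lean document; each statement's English description precedes it below -/
import Mathlib

section
/- The 2n − 3 distortion bound for Two-Extremes is tight: place candidates on the real line at y_1 = −2, y_2 = 0, y_3 = 2, let n ≥ 2 voters be located at x_1 = −1, x_2 = … = x_{n−1} = 0, x_n = 2, and let the action profile be a_1 = 1, a_2 = … = a_{n−1} = 2, a_n = 3. This location profile is consistent with the action profile (x_1 = −1 is equidistant from y_1 and y_2), Two-Extremes outputs the pair (y_1, y_3), SC((y_1, y_3), x) = 2n − 3, and OPT(x) = 1, so the achieved ratio equals 2n − 3. -/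
open Finset

/-- Cost of a point `z` when the pair of candidates `(y k, y l)` is elected:
the distance to the closer of the two winners. -/
noncomputable def pairCost {α : Type*} [PseudoMetricSpace α] {m : ℕ}
    (y : Fin m → α) (k l : Fin m) (z : α) : ℝ :=
  min (dist z (y k)) (dist z (y l))

/-- Social cost of the pair `(y k, y l)` on the location profile `x`. -/
noncomputable def socialCost {α : Type*} [PseudoMetricSpace α] {m n : ℕ}
    (y : Fin m → α) (k l : Fin m) (x : Fin n → α) : ℝ :=
  ∑ i, pairCost y k l (x i)

/-- Optimal social cost over all pairs of distinct candidates. -/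
noncomputable def OPT {α : Type*} [PseudoMetricSpace α] {m n : ℕ}
    (y : Fin m → α) (x : Fin n → α) : ℝ :=
  sInf {c : ℝ | ∃ k l : Fin m, k ≠ l ∧ c = socialCost y k l x}

/-- A location profile `x` is consistent with an action profile `a` if every
voter votes for (one of) her nearest candidate(s). -/
def Consistent {α : Type*} [PseudoMetricSpace α] {m n : ℕ}
    (y : Fin m → α) (a : Fin n → Fin m) (x : Fin n → α) : Prop :=
  ∀ (i : Fin n) (k : Fin m), dist (x i) (y (a i)) ≤ dist (x i) (y k)

/-- The Two-Extremes mechanism on the real line: if at least two distinct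
candidates receive votes, output the leftmost and the rightmost candidates
receiving a vote (candidates are indexed in increasing order of location);
if all voters vote for the single candidate `i`, output `(0, i)` when `i ≠ 0`
and `(0, 1)` when `i = 0`. -/
noncomputable def twoExtremes {n m : ℕ} (hm : 2 ≤ m) (a : Fin n → Fin m) :
    Fin m × Fin m :=
  if h : ∃ j j' : Fin n, a j ≠ a j' then
    ((univ.image a).min' ⟨a h.choose, mem_image_of_mem a (mem_univ h.choose)⟩,
     (univ.image a).max' ⟨a h.choose, mem_image_of_mem a (mem_univ h.choose)⟩)
  else if h' : ∃ j : Fin n, a j ≠ ⟨0, by omega⟩ then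
    (⟨0, by omega⟩, a h'.choose)
  else (⟨0, by omega⟩, ⟨1, by omega⟩)

/-
Every candidate is at distance at least 1 from the first voter at -1, so every pair of distinct
candidates costs at least 1, while the pair at 0 and 2 costs exactly 1. Two-Extremes instead elects
(-2, 2): the first voter (who may vote for -2 since -1 is equidistant from -2 and 0) pins the
left extreme, the last voter the right one, and each of the n - 2 voters at 0 then pays 2.
-/

theorem Fin.sum_ite_first_last {M : Type*} [AddCommMonoid M] {n : ℕ} (hn : 2 ≤ n) (p q r : M) :
    ∑ i : Fin n, (if (i : ℕ) = 0 then p else if (i : ℕ) = n - 1 then q else r) =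
      p + q + (n - 2) • r := by
  obtain ⟨k, rfl⟩ : ∃ k, n = k + 2 := ⟨n - 2, by omega⟩
  rw [Fin.sum_univ_succ, Fin.sum_univ_castSucc]
  simp only [Fin.val_zero, Fin.val_succ, Fin.val_castSucc, Fin.val_last, if_true,
    Nat.add_eq_zero_iff, one_ne_zero, and_false, if_false]
  rw [sum_congr rfl fun i _ => if_neg (by omega), sum_const, if_pos (by omega),
    Nat.add_sub_cancel, add_comm (k • r), add_assoc]

section SocialCost

variable {α : Type*} [PseudoMetricSpace α] {m n : ℕ}

theorem pairCost_nonneg (y : Fin m → α) (k l : Fin m) (z : α) : 0 ≤ pairCost y k l z :=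
  le_min dist_nonneg dist_nonneg

theorem socialCost_eq_of_first_last (hn : 2 ≤ n) (y : Fin m → α) (k l : Fin m)
    {x : Fin n → α} {u v w : α}
    (hx : ∀ i : Fin n, x i = if (i : ℕ) = 0 then u else if (i : ℕ) = n - 1 then v else w) :
    socialCost y k l x = pairCost y k l u + pairCost y k l v + (n - 2) • pairCost y k l w := by
  simp only [socialCost, hx, apply_ite (pairCost y k l)]
  exact Fin.sum_ite_first_last hn _ _ _

theorem OPT_eq_of_forall_le {y : Fin m → α} {x : Fin n → α} {k l : Fin m} (hkl : k ≠ l)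
    (hle : ∀ k' l', k' ≠ l' → socialCost y k l x ≤ socialCost y k' l' x) :
    OPT y x = socialCost y k l x :=
  IsLeast.csInf_eq ⟨⟨k, l, hkl, rfl⟩, by
    rintro _ ⟨k', l', hkl', rfl⟩
    exact hle k' l' hkl'⟩

end SocialCost

theorem twoExtremes_eq_of_forall_le {n m : ℕ} (hm : 2 ≤ m) {a : Fin n → Fin m} {i j : Fin n}
    (hi : ∀ k, a i ≤ a k) (hj : ∀ k, a k ≤ a j) (hij : a i ≠ a j) :
    twoExtremes hm a = (a i, a j) := by
  have hmem : ∀ k, a k ∈ univ.image a := fun k => mem_image_of_mem a (mem_univ k)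
  rw [twoExtremes, dif_pos ⟨i, j, hij⟩]
  refine Prod.ext ?_ ?_
  · refine le_antisymm (min'_le _ _ (hmem i)) (le_min' _ ⟨_, hmem i⟩ _ ?_)
    simpa only [mem_image, mem_univ, true_and, forall_exists_index, forall_apply_eq_imp_iff]
  · refine le_antisymm (max'_le _ ⟨_, hmem j⟩ _ ?_) (le_max' _ _ (hmem j))
    simpa only [mem_image, mem_univ, true_and, forall_exists_index, forall_apply_eq_imp_iff]

/-- Tightness of the `2n - 3` bound for Two-Extremes: candidates at `-2, 0, 2`,
voters at `-1, 0, ..., 0, 2` voting for candidates `0, 1, ..., 1, 2`. The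
profile is consistent, Two-Extremes outputs the pair `(0, 2)`, the achieved
social cost is `2n - 3` and the optimum is `1`. -/
theorem stmt6 (n : ℕ) (hn : 2 ≤ n) (y : Fin 3 → ℝ) (hy : y = ![-2, 0, 2])
    (x : Fin n → ℝ)
    (hx : ∀ i : Fin n,
      x i = if (i : ℕ) = 0 then -1 else if (i : ℕ) = n - 1 then 2 else 0)
    (a : Fin n → Fin 3)
    (ha : ∀ i : Fin n,
      a i = if (i : ℕ) = 0 then 0 else if (i : ℕ) = n - 1 then 2 else 1) :
    Consistent y a x ∧
      twoExtremes (show 2 ≤ 3 by norm_num) a = ((0 : Fin 3), (2 : Fin 3)) ∧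
      socialCost y 0 2 x = 2 * (n : ℝ) - 3 ∧
      OPT y x = 1 := by
  subst hy
  have hcost := fun k l => socialCost_eq_of_first_last hn ![(-2 : ℝ), 0, 2] k l hx
  have hfar : ∀ k l, 1 ≤ pairCost ![(-2 : ℝ), 0, 2] k l (-1) := by
    intro k l
    fin_cases k <;> fin_cases l <;> norm_num [pairCost, Real.dist_eq, Matrix.cons_val_two]
  have hfirst : a ⟨0, by omega⟩ = 0 := by simp [ha]
  have hlast : a ⟨n - 1, by omega⟩ = 2 := by rw [ha, if_neg (by simp; omega), if_pos rfl]
  refine ⟨?_, ?_, ?_, ?_⟩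
  · intro i k
    rw [ha, hx]
    split_ifs <;> fin_cases k <;> norm_num [Real.dist_eq, Matrix.cons_val_two]
  · rw [← hfirst, ← hlast]
    exact twoExtremes_eq_of_forall_le _ (fun k => hfirst ▸ Fin.zero_le _)
      (fun k => hlast ▸ Fin.le_last _) (by rw [hfirst, hlast]; decide)
  · rw [hcost, nsmul_eq_mul, Nat.cast_sub hn]
    norm_num [pairCost, Real.dist_eq, Matrix.cons_val_two]
    ring
  · have hopt : socialCost ![(-2 : ℝ), 0, 2] 1 2 x = 1 := by
      rw [hcost]; norm_num [pairCost, Real.dist_eq, Matrix.cons_val_two]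
    rw [OPT_eq_of_forall_le (by decide : (1 : Fin 3) ≠ 2) fun k l _ => ?_, hopt]
    rw [hopt, hcost]
    linarith [hfar k l, pairCost_nonneg ![(-2 : ℝ), 0, 2] k l 2,
      nsmul_nonneg (pairCost_nonneg ![(-2 : ℝ), 0, 2] k l 0) (n - 2)]
end

section
/- For any m ≥ 3 candidates at arbitrary distinct locations in a Euclidean space and any number n of voters, the Pair-Independent mechanism is a strategy-proof randomized two-winner scv mechanism. -/
open Finset

/-- `f` is a randomized two-winner mechanism: on every action profile it gives a
probability distribution over unordered pairs of distinct candidates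
(represented by a symmetric nonnegative function vanishing on the diagonal whose
values over the pairs `k < l` sum to one). -/
def IsRandMech {m n : ℕ} (f : (Fin n → Fin m) → Fin m → Fin m → ℝ) : Prop :=
  ∀ a : Fin n → Fin m, (∀ k l, 0 ≤ f a k l) ∧ (∀ k l, f a k l = f a l k) ∧
    (∀ k, f a k k = 0) ∧
    ∑ p ∈ univ.filter (fun p : Fin m × Fin m => p.1 < p.2), f a p.1 p.2 = 1

/-- Expected cost of the point `z` under the lottery `f a`. -/
noncomputable def expCost {α : Type*} [PseudoMetricSpace α] {m n : ℕ}
    (y : Fin m → α) (f : (Fin n → Fin m) → Fin m → Fin m → ℝ)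
    (a : Fin n → Fin m) (z : α) : ℝ :=
  ∑ p ∈ univ.filter (fun p : Fin m × Fin m => p.1 < p.2),
    f a p.1 p.2 * pairCost y p.1 p.2 z

/-- Expected social cost of the randomized mechanism `f` on action profile `a`
and location profile `x`. -/
noncomputable def expSC {α : Type*} [PseudoMetricSpace α] {m n : ℕ}
    (y : Fin m → α) (f : (Fin n → Fin m) → Fin m → Fin m → ℝ)
    (a : Fin n → Fin m) (x : Fin n → α) : ℝ :=
  ∑ p ∈ univ.filter (fun p : Fin m × Fin m => p.1 < p.2),
    f a p.1 p.2 * socialCost y p.1 p.2 x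

/-- Strategy-proofness of a randomized two-winner mechanism: voting for a
nearest candidate always minimizes a voter's expected cost, whatever the
other voters do. -/
def RandSP {α : Type*} [PseudoMetricSpace α] {m n : ℕ}
    (y : Fin m → α) (f : (Fin n → Fin m) → Fin m → Fin m → ℝ) : Prop :=
  ∀ (i : Fin n) (xi : α) (a : Fin n → Fin m) (astar ai' : Fin m),
    (∀ k, dist xi (y astar) ≤ dist xi (y k)) →
    expCost y f (Function.update a i astar) xi ≤
      expCost y f (Function.update a i ai') xi

/-- Number of votes received by candidate `k` under action profile `a`. -/
def votes {m n : ℕ} (a : Fin n → Fin m) (k : Fin m) : ℕ :=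
  (univ.filter fun i => a i = k).card

/-- The Pair-Independent mechanism: if some candidate receives all `n` votes,
every pair containing that candidate is elected with probability `1/(m-1)`;
otherwise the pair `(k, l)` is elected with probability
`n_k/(n - n_l) + n_l/(n - n_k) - (n_k + n_l)/n`. -/
noncomputable def pairIndep (n m : ℕ) (a : Fin n → Fin m) (k l : Fin m) : ℝ :=
  if k = l then 0
  else if votes a k = n ∨ votes a l = n then 1 / ((m : ℝ) - 1)
  else (votes a k : ℝ) / ((n : ℝ) - (votes a l : ℝ)) +
    (votes a l : ℝ) / ((n : ℝ) - (votes a k : ℝ)) -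
    ((votes a k : ℝ) + (votes a l : ℝ)) / (n : ℝ)

/-! The Pair-Independent lottery is a two-stage draw: pick a voter uniformly at random and elect
her candidate `k`, then pick one of the other `n - n_k` votes (those not for `k`) uniformly and
elect its candidate `l`; indeed `q_{k,l} = (n_k/n)·n_l/(n - n_k) + (n_l/n)·n_k/(n - n_l)`.
Hence a voter's expected cost is `(1/n) ∑_k n_k C_k`, where `C_k` is her expected cost given
that `k` is drawn first. Let `c` be the votes of the others and `s` the voter's nearest
candidate, at distance `δ`. Every pair costs her at least `δ` and every pair containing `s`
costs exactly `δ`. Comparing a truthful vote for `s` with a vote for `b`, in both profiles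
`(n - c_k) C_k = ∑_{l ≠ k} c_l cost(k, l) + e`, where the extra term `e` is exactly `δ` for the
vote `s` and at least `δ` for the vote `b`; so every `C_k` weakly increases, and so does the
term `C_s = δ ≤ C_b` contributed by the voter herself. -/

open Finset

lemma sum_filter_lt_add_swap {ι M : Type*} [Fintype ι] [LinearOrder ι] [AddCommMonoid M]
    (g : ι → ι → M) :
    ∑ p ∈ univ.filter (fun p : ι × ι => p.1 < p.2), (g p.1 p.2 + g p.2 p.1) =
      ∑ k, ∑ l ∈ univ.erase k, g k l := by
  have hswap : ∑ p ∈ univ.filter (fun p : ι × ι => p.1 < p.2), g p.2 p.1 =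
      ∑ p ∈ univ.filter (fun p : ι × ι => p.2 < p.1), g p.1 p.2 :=
    sum_equiv (Equiv.prodComm ι ι) (by simp) (by simp)
  have hoffDiag : ∑ k, ∑ l ∈ univ.erase k, g k l =
      ∑ p ∈ univ.filter (fun p : ι × ι => p.1 ≠ p.2), g p.1 p.2 := by
    rw [sum_filter, Fintype.sum_prod_type]
    refine sum_congr rfl fun k _ => ?_
    rw [← sum_filter]
    congr 1
    ext l
    simp [eq_comm]
  rw [sum_add_distrib, hswap, hoffDiag, ← sum_union]
  · congr 1
    ext p
    simp
  · exact disjoint_filter.2 fun p _ h => lt_asymm h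

section VoteVectors

variable {ι : Type*} [Fintype ι] {v : ι → ℕ} {n : ℕ}

lemma apply_le_of_sum_eq (hv : ∑ l, v l = n) (k : ι) : v k ≤ n :=
  hv ▸ single_le_sum (fun l _ => Nat.zero_le (v l)) (mem_univ k)

variable [DecidableEq ι]

lemma apply_eq_zero_of_apply_eq_sum (hv : ∑ l, v l = n) {k l : ι} (hk : v k = n)
    (hlk : l ≠ k) : v l = 0 := by
  have hsum := add_sum_erase univ v (mem_univ k)
  have hl := single_le_sum (fun j _ => Nat.zero_le (v j)) (mem_erase.2 ⟨hlk, mem_univ l⟩)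
  omega

lemma sum_erase_natCast_eq_sub (hv : ∑ l, v l = n) (k : ι) :
    ∑ l ∈ univ.erase k, (v l : ℝ) = n - v k := by
  rw [← hv, Nat.cast_sum, ← add_sum_erase _ _ (mem_univ k)]
  ring

lemma sum_add_single_one (c : ι → ℕ) (w : ι) :
    ∑ l, (c + Pi.single w 1 : ι → ℕ) l = ∑ l, c l + 1 := by
  simp [sum_add_distrib]

lemma sum_add_single_one_mul (c : ι → ℕ) (w : ι) (f : ι → ℝ) :
    ∑ k, ((c + Pi.single w 1 : ι → ℕ) k : ℝ) * f k = ∑ k, (c k : ℝ) * f k + f w := by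
  simp [add_mul, sum_add_distrib, Pi.single_apply]

end VoteVectors

lemma pairCost_comm {α : Type*} [PseudoMetricSpace α] {m : ℕ} (y : Fin m → α) (k l : Fin m)
    (z : α) : pairCost y k l z = pairCost y l k z :=
  min_comm _ _

section Votes

variable {m n : ℕ}

lemma sum_votes (a : Fin n → Fin m) : ∑ k, votes a k = n := by
  simpa [votes] using (card_eq_sum_card_fiberwise (f := a) (s := univ) (t := univ)
    fun i _ => mem_univ (a i)).symm

lemma votes_update (a : Fin n → Fin m) (i : Fin n) (w : Fin m) :
    votes (Function.update a i w) = (fun l => #{j ∈ univ.erase i | a j = l}) + Pi.single w 1 := by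
  ext l
  rw [Pi.add_apply, votes, card_filter, card_filter, ← sum_erase_add _ _ (mem_univ i)]
  congr 1
  · exact sum_congr rfl fun j hj => by rw [Function.update_of_ne (ne_of_mem_erase hj)]
  · simp [Pi.single_apply, eq_comm]

end Votes

/-- In the two-stage draw, the probability that `l` is elected second given that `k` was elected
first, for the vote vector `v` of `n` votes. -/
noncomputable def secondProb (n m : ℕ) (v : Fin m → ℕ) (k l : Fin m) : ℝ :=
  if v k = n then 1 / ((m : ℝ) - 1) else v l / ((n : ℝ) - v k)

noncomputable def condCost {α : Type*} [PseudoMetricSpace α] {m : ℕ} (y : Fin m → α)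
    (n : ℕ) (v : Fin m → ℕ) (z : α) (k : Fin m) : ℝ :=
  ∑ l ∈ univ.erase k, secondProb n m v k l * pairCost y k l z

section CondCost

variable {α : Type*} [PseudoMetricSpace α] {m n : ℕ} (y : Fin m → α) (z : α)
  {v : Fin m → ℕ}

lemma secondProb_nonneg (hv : ∑ l, v l = n) (k l : Fin m) : 0 ≤ secondProb n m v k l := by
  have hm : (1 : ℝ) ≤ m := by exact_mod_cast k.pos
  have hvk : (v k : ℝ) ≤ n := by exact_mod_cast apply_le_of_sum_eq hv k
  unfold secondProb
  split_ifs
  · exact div_nonneg zero_le_one (by linarith)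
  · exact div_nonneg (Nat.cast_nonneg _) (by linarith)

lemma sum_secondProb (hm : 2 ≤ m) (hv : ∑ l, v l = n) (k : Fin m) :
    ∑ l ∈ univ.erase k, secondProb n m v k l = 1 := by
  have hm' : (2 : ℝ) ≤ m := by exact_mod_cast hm
  by_cases hk : v k = n
  · simp only [secondProb, hk, if_true, sum_const, card_erase_of_mem (mem_univ k),
      card_univ, Fintype.card_fin, nsmul_eq_mul, Nat.cast_pred k.pos]
    exact mul_one_div_cancel (by linarith)
  · have hpos : (0 : ℝ) < n - v k :=
      sub_pos.2 (by exact_mod_cast lt_of_le_of_ne (apply_le_of_sum_eq hv k) hk)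
    simp only [secondProb, hk, if_false]
    rw [← sum_div, sum_erase_natCast_eq_sub hv k, div_self hpos.ne']

lemma condCost_eq_of_forall_eq (hm : 2 ≤ m) (hv : ∑ l, v l = n) {k : Fin m} {δ : ℝ}
    (h : ∀ l, pairCost y k l z = δ) : condCost y n v z k = δ := by
  simp only [condCost, h, ← sum_mul, sum_secondProb hm hv, one_mul]

lemma le_condCost (hm : 2 ≤ m) (hv : ∑ l, v l = n) {k : Fin m} {δ : ℝ}
    (h : ∀ l, δ ≤ pairCost y k l z) : δ ≤ condCost y n v z k :=
  calc δ = ∑ l ∈ univ.erase k, secondProb n m v k l * δ := by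
        rw [← sum_mul, sum_secondProb hm hv, one_mul]
    _ ≤ condCost y n v z k :=
        sum_le_sum fun l _ => mul_le_mul_of_nonneg_left (h l) (secondProb_nonneg hv k l)

/-- When `v k = n` both sides vanish. -/
lemma sub_mul_condCost (hv : ∑ l, v l = n) (k : Fin m) :
    ((n : ℝ) - v k) * condCost y n v z k =
      ∑ l ∈ univ.erase k, (v l : ℝ) * pairCost y k l z := by
  by_cases hk : v k = n
  · rw [hk, sub_self, zero_mul]
    refine (sum_eq_zero fun l hl => ?_).symm
    rw [apply_eq_zero_of_apply_eq_sum hv hk (ne_of_mem_erase hl), Nat.cast_zero, zero_mul]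
  · have hne : (n : ℝ) - v k ≠ 0 := sub_ne_zero.2 (by exact_mod_cast Ne.symm hk)
    simp only [condCost, secondProb, hk, if_false, mul_sum]
    refine sum_congr rfl fun l _ => ?_
    field_simp

end CondCost

section Deviation

variable {α : Type*} [PseudoMetricSpace α] {m n : ℕ} (y : Fin m → α) (z : α)
  {c : Fin m → ℕ}

lemma sub_mul_condCost_add_single (hc : ∑ l, c l + 1 = n) (w k : Fin m) :
    ((n : ℝ) - c k) * condCost y n (c + Pi.single w 1) z k =
      ∑ l ∈ univ.erase k, (c l : ℝ) * pairCost y k l z +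
        if w = k then condCost y n (c + Pi.single w 1) z k else pairCost y k w z := by
  have hv := sub_mul_condCost y z ((sum_add_single_one c w).trans hc) k
  rcases eq_or_ne w k with rfl | hwk
  · simp only [Pi.add_apply, Pi.single_eq_same, Nat.cast_add, Nat.cast_one, Pi.single_apply,
      Nat.cast_ite, Nat.cast_zero, add_mul, ite_mul, one_mul, zero_mul, sum_add_distrib,
      sum_ite_eq', mem_erase, ne_eq, not_true_eq_false, false_and, if_false, add_zero,
      if_true] at hv ⊢
    linarith
  · simpa [Pi.single_apply, add_mul, sum_add_distrib, hwk] using hv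

variable {s : Fin m}

lemma condCost_add_single_le_of_nearest (hm : 2 ≤ m) (hc : ∑ l, c l + 1 = n)
    (hs : ∀ l, dist z (y s) ≤ dist z (y l)) (b k : Fin m) :
    condCost y n (c + Pi.single s 1) z k ≤ condCost y n (c + Pi.single b 1) z k := by
  have hge : ∀ k l, dist z (y s) ≤ pairCost y k l z := fun k l => le_min (hs k) (hs l)
  have hpos : (0 : ℝ) < n - c k := by
    have : c k + 1 ≤ n := hc ▸ Nat.add_le_add_right (single_le_sum (by simp) (mem_univ k)) 1
    rw [sub_pos]
    exact_mod_cast this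
  have hv (w : Fin m) : ∑ l, (c + Pi.single w 1 : Fin m → ℕ) l = n :=
    (sum_add_single_one c w).trans hc
  refine le_of_mul_le_mul_left ?_ hpos
  rw [sub_mul_condCost_add_single y z hc, sub_mul_condCost_add_single y z hc]
  gcongr
  calc (if s = k then condCost y n (c + Pi.single s 1) z k else pairCost y k s z)
      = dist z (y s) := by
        split_ifs with hsk
        · exact condCost_eq_of_forall_eq y z hm (hv s) fun l => hsk ▸ min_eq_left (hs l)
        · exact min_eq_right (hs k)
    _ ≤ if b = k then condCost y n (c + Pi.single b 1) z k else pairCost y k b z := by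
        split_ifs
        · exact le_condCost y z hm (hv b) (hge k)
        · exact hge k b

lemma sum_mul_condCost_add_single_le_of_nearest (hm : 2 ≤ m) (hc : ∑ l, c l + 1 = n)
    (hs : ∀ l, dist z (y s) ≤ dist z (y l)) (b : Fin m) :
    ∑ k, ((c + Pi.single s 1 : Fin m → ℕ) k : ℝ) * condCost y n (c + Pi.single s 1) z k ≤
      ∑ k, ((c + Pi.single b 1 : Fin m → ℕ) k : ℝ) *
        condCost y n (c + Pi.single b 1) z k := by
  have hv (w : Fin m) : ∑ l, (c + Pi.single w 1 : Fin m → ℕ) l = n :=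
    (sum_add_single_one c w).trans hc
  rw [sum_add_single_one_mul, sum_add_single_one_mul]
  gcongr with k
  · exact condCost_add_single_le_of_nearest y z hm hc hs b k
  · calc condCost y n (c + Pi.single s 1) z s = dist z (y s) :=
          condCost_eq_of_forall_eq y z hm (hv s) fun l => min_eq_left (hs l)
      _ ≤ condCost y n (c + Pi.single b 1) z b :=
          le_condCost y z hm (hv b) fun l => le_min (hs b) (hs l)

end Deviation

section PairIndep

variable {α : Type*} [PseudoMetricSpace α] {m n : ℕ}

lemma pairIndep_eq (hn : 0 < n) (a : Fin n → Fin m) {k l : Fin m} (hkl : k ≠ l) :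
    pairIndep n m a k l =
      (votes a k * secondProb n m (votes a) k l +
        votes a l * secondProb n m (votes a) l k) / n := by
  have hn' : (n : ℝ) ≠ 0 := by positivity
  unfold pairIndep secondProb
  by_cases hk : votes a k = n
  · simp only [hkl, ↓reduceIte, hk, true_or, one_div,
      apply_eq_zero_of_apply_eq_sum (sum_votes a) hk hkl.symm, Nat.cast_zero, sub_zero, mul_ite,
      zero_mul, ite_self, add_zero]
    field_simp
  by_cases hl : votes a l = n
  · simp only [hkl, ↓reduceIte, hl, or_true, one_div,
      apply_eq_zero_of_apply_eq_sum (sum_votes a) hl hkl, Nat.cast_zero, sub_zero, mul_ite,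
      zero_mul, ite_self, zero_add]
    field_simp
  have hk' : (n : ℝ) - votes a k ≠ 0 := sub_ne_zero.2 (by exact_mod_cast Ne.symm hk)
  have hl' : (n : ℝ) - votes a l ≠ 0 := sub_ne_zero.2 (by exact_mod_cast Ne.symm hl)
  simp only [hkl, hk, hl, or_self, if_false]
  field_simp
  ring

lemma expCost_pairIndep (hn : 0 < n) (y : Fin m → α) (a : Fin n → Fin m) (z : α) :
    expCost y (pairIndep n m) a z =
      (∑ k, (votes a k : ℝ) * condCost y n (votes a) z k) / n := by
  let g k l := (votes a k : ℝ) * secondProb n m (votes a) k l * pairCost y k l z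
  calc expCost y (pairIndep n m) a z
      = ∑ p ∈ univ.filter (fun p : Fin m × Fin m => p.1 < p.2),
          (g p.1 p.2 + g p.2 p.1) / n := by
        refine sum_congr rfl fun p hp => ?_
        simp only [pairIndep_eq hn a (mem_filter.1 hp).2.ne, g, pairCost_comm y p.2 p.1]
        ring
    _ = (∑ k, (votes a k : ℝ) * condCost y n (votes a) z k) / n := by
        rw [← sum_div, sum_filter_lt_add_swap]
        simp only [condCost, mul_sum, g, mul_assoc]

end PairIndep

theorem stmt10_general {dim m n : ℕ} (hm : 3 ≤ m)
    (y : Fin m → EuclideanSpace ℝ (Fin dim)) :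
    RandSP y (pairIndep n m) := by
  intro i z a s b hs
  set c : Fin m → ℕ := fun l => #{j ∈ univ.erase i | a j = l}
  have hc : ∑ l, c l + 1 = n := by
    rw [← sum_add_single_one c s, ← votes_update, sum_votes]
  rw [expCost_pairIndep i.pos, expCost_pairIndep i.pos, votes_update, votes_update]
  exact div_le_div_of_nonneg_right
    (sum_mul_condCost_add_single_le_of_nearest y z (by omega) hc hs b) (Nat.cast_nonneg n)

/-- For any `m ≥ 3` candidates at distinct locations in a Euclidean space, the
Pair-Independent mechanism is a strategy-proof randomized two-winner scv
mechanism. -/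
theorem stmt10 {dim m n : ℕ} (hm : 3 ≤ m)
    (y : Fin m → EuclideanSpace ℝ (Fin dim)) (hy : Function.Injective y) :
    RandSP y (pairIndep n m) :=
  stmt10_general hm y
end
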